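/- arXiv:1905.06485 — 2 statements merged into one kernel-verified Lean document; each statement's English description precedes it below -/
import Mathlib

section
/- Lower bound of the free boundary in dimension two: Let c > 0 and let u be a viscosity solution of min{−(1/2)Δu + c, u − g} = 0 on ℝ² with at most linear growth, where g(x₁, x₂) = max{x₁, x₂, 0}. Then u(x₁, x₂) ≥ η_c((x₁ + x₂)/√2, (x₁ − x₂)/√2) for all (x₁, x₂) ∈ ℝ². Consequently, for every (x₁, x₂) with x₁ + x₂ ≥ 0 and |x₁ − x₂| < 1/(2c), one has u(x₁, x₂) > g(x₁, x₂); that is, in the half-plane x₁ + x₂ ≥ 0 the free boundary of u lies inside the set {|x₁ − x₂| ≥ 1/(2c)}. -/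
open Filter MeasureTheory

noncomputable def lap {d : ℕ} (φ : EuclideanSpace ℝ (Fin d) → ℝ)
    (x : EuclideanSpace ℝ (Fin d)) : ℝ :=
  ∑ i : Fin d, iteratedFDeriv ℝ 2 φ x ![EuclideanSpace.single i 1, EuclideanSpace.single i 1]

noncomputable def gObst {d : ℕ} (x : EuclideanSpace ℝ (Fin d)) : ℝ :=
  max (⨆ i, x i) 0

def IsVSubsol {d : ℕ} (c : ℝ) (ψ : EuclideanSpace ℝ (Fin d) → ℝ)
    (Ω : Set (EuclideanSpace ℝ (Fin d))) (u : EuclideanSpace ℝ (Fin d) → ℝ) : Prop :=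
  ∀ x₀ ∈ Ω, ψ x₀ < u x₀ →
    ∀ φ : EuclideanSpace ℝ (Fin d) → ℝ, ContDiff ℝ 2 φ → φ x₀ = u x₀ →
      (∀ᶠ x in nhds x₀, u x ≤ φ x) → -(1 / 2 : ℝ) * lap φ x₀ + c ≤ 0

def IsVSupersol {d : ℕ} (c : ℝ) (ψ : EuclideanSpace ℝ (Fin d) → ℝ)
    (Ω : Set (EuclideanSpace ℝ (Fin d))) (u : EuclideanSpace ℝ (Fin d) → ℝ) : Prop :=
  (∀ x ∈ Ω, ψ x ≤ u x) ∧
  ∀ x₀ ∈ Ω, ∀ φ : EuclideanSpace ℝ (Fin d) → ℝ, ContDiff ℝ 2 φ → φ x₀ = u x₀ →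
    (∀ᶠ x in nhds x₀, φ x ≤ u x) → 0 ≤ -(1 / 2 : ℝ) * lap φ x₀ + c

def IsVSol {d : ℕ} (c : ℝ) (ψ : EuclideanSpace ℝ (Fin d) → ℝ)
    (Ω : Set (EuclideanSpace ℝ (Fin d))) (u : EuclideanSpace ℝ (Fin d) → ℝ) : Prop :=
  IsVSubsol c ψ Ω u ∧ IsVSupersol c ψ Ω u

def LinGrowth {d : ℕ} (ψ u : EuclideanSpace ℝ (Fin d) → ℝ) : Prop :=
  (∀ x, ψ x ≤ u x) ∧ ∃ C : ℝ, ∀ x, u x ≤ (∑ i, |x i|) + C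

noncomputable def etaS (θ t s : ℝ) : ℝ :=
  if |s| ≤ 1 / (2 * Real.sqrt 2 * θ) then
    t / Real.sqrt 2 + θ * s ^ 2 + 1 / (8 * θ)
  else (t + |s|) / Real.sqrt 2

/-!
Rotated back to the coordinates `(x₁, x₂)`, `η_θ` is `max x₁ x₂ + θ/2 · ((1/(2θ) - |x₁ - x₂|)₊)²`.
On the strip `|x₁ - x₂| < 1/(2θ)` this is a quadratic with Laplacian `2θ`, and off the strip it is
`max x₁ x₂ ≤ g ≤ u`. For `θ > c`, if `u < η_θ` somewhere, the penalised difference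
`u - η_θ + ε (x₁ + x₂)²` has a bounded negative set, hence attains a negative minimum, necessarily
inside the strip. There the quadratic touches `u` from below with `-½Δ + c = c - θ + 2ε < 0`,
contradicting the supersolution property. Letting `θ ↓ c` gives `u ≥ η_c`, and inside the strip
`|x₁ - x₂| < 1/(2c)` the barrier lies strictly above `max x₁ x₂`, which dominates `0` when
`x₁ + x₂ ≥ 0`.
-/

open Bornology Topology

section Laplacian

variable {d : ℕ} {f g : EuclideanSpace ℝ (Fin d) → ℝ} (x : EuclideanSpace ℝ (Fin d))

theorem lap_add (hf : ContDiff ℝ 2 f) (hg : ContDiff ℝ 2 g) :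
    lap (fun y => f y + g y) x = lap f x + lap g x := by
  have h := iteratedFDeriv_add_apply (x := x) hf.contDiffAt hg.contDiffAt
  simp only [Pi.add_def] at h
  simp [lap, h, Finset.sum_add_distrib]

theorem lap_const_mul (a : ℝ) (hf : ContDiff ℝ 2 f) :
    lap (fun y => a * f y) x = a * lap f x := by
  have h := iteratedFDeriv_const_smul_apply (a := a) (x := x) hf.contDiffAt
  simp only [Pi.smul_def, smul_eq_mul] at h
  simp [lap, h, Finset.mul_sum]

theorem lap_clm_add_const (ℓ : EuclideanSpace ℝ (Fin d) →L[ℝ] ℝ) (k : ℝ) :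
    lap (fun y => ℓ y + k) x = 0 := by
  have : fderiv ℝ (fun y => ℓ y + k) = fun _ => ℓ := by
    funext y; exact (ℓ.hasFDerivAt.add_const k).fderiv
  simp [lap, iteratedFDeriv_two_apply, this]

theorem lap_clm_sq (ℓ : EuclideanSpace ℝ (Fin d) →L[ℝ] ℝ) :
    lap (fun y => ℓ y ^ 2) x = 2 * ∑ i, ℓ (EuclideanSpace.single i 1) ^ 2 := by
  have : fderiv ℝ (fun y => ℓ y ^ 2) = ((2 : ℝ) • ℓ).smulRight ℓ := by
    funext y
    refine ((ℓ.hasFDerivAt.pow 2).congr_fderiv ?_).fderiv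
    ext v; simp
  simp only [lap, iteratedFDeriv_two_apply, this, ContinuousLinearMap.fderiv, Finset.mul_sum]
  simp [sq, mul_assoc]

end Laplacian

section Plane

local notation "ℝ²" => EuclideanSpace ℝ (Fin 2)

theorem contDiff_quadratic_two (a b e k : ℝ) :
    ContDiff ℝ 2
      (fun y : ℝ² => a * (y 0 + y 1) + k + b * (y 0 - y 1) ^ 2 + e * (y 0 + y 1) ^ 2) := by
  fun_prop

theorem lap_quadratic_two (a b e k : ℝ) (x : ℝ²) :
    lap (fun y : ℝ² => a * (y 0 + y 1) + k + b * (y 0 - y 1) ^ 2 + e * (y 0 + y 1) ^ 2) x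
      = 4 * b + 4 * e := by
  set sum : ℝ² →L[ℝ] ℝ := EuclideanSpace.proj 0 + EuclideanSpace.proj 1
  set diff : ℝ² →L[ℝ] ℝ := EuclideanSpace.proj 0 - EuclideanSpace.proj 1
  have hsum : ContDiff ℝ 2 (fun y : ℝ² => sum y ^ 2) := by fun_prop
  have hdiff : ContDiff ℝ 2 (fun y : ℝ² => diff y ^ 2) := by fun_prop
  have hφ : (fun y : ℝ² => a * (y 0 + y 1) + k + b * (y 0 - y 1) ^ 2 + e * (y 0 + y 1) ^ 2)
      = fun y => (a • sum) y + k + b * diff y ^ 2 + e * sum y ^ 2 := by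
    funext y; simp [sum, diff]; ring
  rw [hφ, lap_add _ (by fun_prop) (by fun_prop), lap_add _ (by fun_prop) (by fun_prop),
    lap_clm_add_const, lap_const_mul _ _ hsum, lap_const_mul _ _ hdiff, lap_clm_sq, lap_clm_sq]
  simp [sum, diff, Fin.sum_univ_two]
  ring

theorem gObst_eq_max (y : ℝ²) : gObst y = max (max (y 0) (y 1)) 0 := by
  rw [gObst, ← Finset.sup'_univ_eq_ciSup]
  simp [Fin.univ_succ]

theorem isBounded_setOf_sq_add_le_sq_sub_le (a b : ℝ) :
    IsBounded {y : ℝ² | (y 0 + y 1) ^ 2 ≤ a ∧ (y 0 - y 1) ^ 2 ≤ b} := by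
  refine (Metric.isBounded_iff_subset_closedBall 0).2 ⟨√((a + b) / 2), fun y ⟨ha, hb⟩ => ?_⟩
  rw [Metric.mem_closedBall, dist_zero_right, Real.le_sqrt (norm_nonneg y) (by nlinarith),
    EuclideanSpace.real_norm_sq_eq, Fin.sum_univ_two]
  linarith

noncomputable def barrier (θ : ℝ) (y : ℝ²) : ℝ :=
  max (y 0) (y 1) + θ / 2 * max (1 / (2 * θ) - |y 0 - y 1|) 0 ^ 2

variable {θ : ℝ}

theorem barrier_eq_of_abs_le (hθ : 0 < θ) {y : ℝ²} (h : |y 0 - y 1| ≤ 1 / (2 * θ)) :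
    barrier θ y = (y 0 + y 1) / 2 + θ / 2 * (y 0 - y 1) ^ 2 + 1 / (8 * θ) := by
  have hmax : max (y 0) (y 1) = (y 0 + y 1 + |y 0 - y 1|) / 2 := by
    linarith [max_sub_min_eq_abs' (y 0) (y 1), min_add_max (y 0) (y 1)]
  rw [barrier, max_eq_left (sub_nonneg.2 h), hmax, ← sq_abs (y 0 - y 1)]
  field_simp
  ring

theorem barrier_eq_max_of_le {y : ℝ²} (h : 1 / (2 * θ) ≤ |y 0 - y 1|) :
    barrier θ y = max (y 0) (y 1) := by
  rw [barrier, max_eq_right (sub_nonpos.2 h)]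
  ring

theorem max_lt_barrier {y : ℝ²} (h : |y 0 - y 1| < 1 / (2 * θ)) :
    max (y 0) (y 1) < barrier θ y := by
  have hθ : 0 < θ := by
    have := (abs_nonneg _).trans_lt h
    rw [one_div_pos] at this
    linarith
  have : 0 < max (1 / (2 * θ) - |y 0 - y 1|) 0 := lt_max_of_lt_left (sub_pos.2 h)
  rw [barrier]
  have := mul_pos (half_pos hθ) (pow_pos this 2)
  linarith

theorem barrier_le_max_add (hθ : 0 < θ) (y : ℝ²) :
    barrier θ y ≤ max (y 0) (y 1) + 1 / (8 * θ) := by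
  have hle : max (1 / (2 * θ) - |y 0 - y 1|) 0 ≤ 1 / (2 * θ) :=
    max_le (by linarith [abs_nonneg (y 0 - y 1)]) (by positivity)
  have hsq := pow_le_pow_left₀ (le_max_right _ _) hle 2
  have h8 : θ / 2 * (1 / (2 * θ)) ^ 2 = 1 / (8 * θ) := by field_simp; ring
  rw [barrier]
  nlinarith

theorem continuous_barrier (θ : ℝ) : Continuous (barrier θ) := by
  unfold barrier; fun_prop

theorem continuousAt_barrier_param (y : ℝ²) (hθ : θ ≠ 0) :
    ContinuousAt (fun t => barrier t y) θ := by
  unfold barrier; fun_prop (disch := positivity)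

theorem etaS_eq_barrier (hθ : 0 < θ) (y : ℝ²) :
    etaS θ ((y 0 + y 1) / √2) ((y 0 - y 1) / √2) = barrier θ y := by
  have hs : |(y 0 - y 1) / √2| = |y 0 - y 1| / √2 := by
    rw [abs_div, abs_of_nonneg (Real.sqrt_nonneg 2)]
  have hr : √2 * √2 = 2 := Real.mul_self_sqrt zero_le_two
  have hcond : |(y 0 - y 1) / √2| ≤ 1 / (2 * √2 * θ) ↔ |y 0 - y 1| ≤ 1 / (2 * θ) := by
    rw [hs, div_le_div_iff₀ (by positivity) (by positivity),
      le_div_iff₀ (by positivity), one_mul]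
    constructor <;> intro h <;> nlinarith [Real.sqrt_pos.2 (zero_lt_two' ℝ)]
  rw [etaS]
  split_ifs with h
  · rw [barrier_eq_of_abs_le hθ (hcond.1 h), div_pow, Real.sq_sqrt zero_le_two, div_div, hr]
    ring
  · rw [barrier_eq_max_of_le (not_le.1 (hcond.not.1 h)).le, hs, ← add_div, div_div, hr]
    linarith [max_sub_min_eq_abs' (y 0) (y 1), min_add_max (y 0) (y 1)]

end Plane

section Comparison

local notation "ℝ²" => EuclideanSpace ℝ (Fin 2)

variable {c θ ε : ℝ} {u : ℝ² → ℝ}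

theorem IsVSupersol.not_isLocalMin_sub_barrier (hu : IsVSupersol c gObst Set.univ u)
    (hθ : 0 < θ) (hεθ : c + 2 * ε < θ) {x₀ : ℝ²} (hx₀ : |x₀ 0 - x₀ 1| < 1 / (2 * θ)) :
    ¬ IsLocalMin (fun y => u y - barrier θ y + ε * (y 0 + y 1) ^ 2) x₀ := by
  intro hmin
  set k := u x₀ - barrier θ x₀ + ε * (x₀ 0 + x₀ 1) ^ 2
  set φ : ℝ² → ℝ := fun y =>
    1 / 2 * (y 0 + y 1) + (1 / (8 * θ) + k) + θ / 2 * (y 0 - y 1) ^ 2 + -ε * (y 0 + y 1) ^ 2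
  have hφ : ∀ y : ℝ², |y 0 - y 1| ≤ 1 / (2 * θ) →
      φ y = barrier θ y - ε * (y 0 + y 1) ^ 2 + k := by
    intro y hy
    rw [barrier_eq_of_abs_le hθ hy]
    ring
  have htouch : φ x₀ = u x₀ := by
    rw [hφ x₀ hx₀.le]
    ring
  have hstrip : {y : ℝ² | |y 0 - y 1| < 1 / (2 * θ)} ∈ 𝓝 x₀ :=
    (isOpen_lt (by fun_prop) continuous_const).mem_nhds hx₀
  have hbelow : ∀ᶠ y in 𝓝 x₀, φ y ≤ u y := by
    filter_upwards [hmin, hstrip] with y hy hy'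
    rw [hφ y (le_of_lt hy')]
    linarith
  have := hu.2 x₀ trivial φ (contDiff_quadratic_two ..) htouch hbelow
  rw [lap_quadratic_two] at this
  linarith

theorem IsVSupersol.barrier_le (hu : IsVSupersol c gObst Set.univ u) (hcont : Continuous u)
    (hθ : 0 < θ) (hcθ : c < θ) (x : ℝ²) : barrier θ x ≤ u x := by
  by_contra! hlt
  obtain ⟨ε, ⟨hεθ, hεx⟩, hε⟩ :
      ∃ ε, (c + 2 * ε < θ ∧ ε * (x 0 + x 1) ^ 2 < barrier θ x - u x) ∧ 0 < ε :=
    ((((Continuous.tendsto (by fun_prop) 0).eventually_lt_const (by simpa using hcθ)).and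
      ((Continuous.tendsto (by fun_prop) 0).eventually_lt_const (by simpa using hlt))).filter_mono
      nhdsWithin_le_nhds |>.and (self_mem_nhdsWithin (s := Set.Ioi 0))).exists
  set w : ℝ² → ℝ := fun y => u y - barrier θ y + ε * (y 0 + y 1) ^ 2
  have hwx : w x < 0 := by simp only [w]; linarith
  have hneg : ∀ y, w y < 0 →
      |y 0 - y 1| < 1 / (2 * θ) ∧ ε * (y 0 + y 1) ^ 2 < 1 / (8 * θ) := by
    intro y hy
    have hmax : max (y 0) (y 1) ≤ u y := (gObst_eq_max y ▸ le_max_left _ _).trans (hu.1 y trivial)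
    have := barrier_le_max_add hθ y
    simp only [w] at hy
    refine ⟨not_le.1 fun h => ?_, by linarith⟩
    rw [barrier_eq_max_of_le h] at hy
    nlinarith [sq_nonneg (y 0 + y 1)]
  have hb : IsBounded {y | w y ≤ w x} := by
    refine (isBounded_setOf_sq_add_le_sq_sub_le (1 / (8 * θ) / ε) ((1 / (2 * θ)) ^ 2)).subset ?_
    intro y hy
    obtain ⟨hd, hs⟩ := hneg y (hy.trans_lt hwx)
    exact ⟨(le_div_iff₀ hε).2 (by linarith), sq_le_sq' (abs_lt.1 hd).1.le (abs_lt.1 hd).2.le⟩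
  have hwcont : Continuous w := (hcont.sub (continuous_barrier θ)).add (by fun_prop)
  obtain ⟨x₀, hx₀⟩ := hwcont.exists_forall_le_of_isBounded x hb
  exact hu.not_isLocalMin_sub_barrier hθ hεθ (hneg x₀ ((hx₀ x).trans_lt hwx)).1
    (Filter.Eventually.of_forall hx₀)

end Comparison

theorem lower_bound_free_boundary_dim_two_general (c : ℝ) (hc : 0 < c)
    (u : EuclideanSpace ℝ (Fin 2) → ℝ) (hucont : Continuous u)
    (hu : IsVSol c gObst Set.univ u) :
    (∀ x : EuclideanSpace ℝ (Fin 2),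
        etaS c ((x 0 + x 1) / Real.sqrt 2) ((x 0 - x 1) / Real.sqrt 2) ≤ u x) ∧
      ∀ x : EuclideanSpace ℝ (Fin 2),
        0 ≤ x 0 + x 1 → |x 0 - x 1| < 1 / (2 * c) → gObst x < u x := by
  have hbarrier : ∀ x, barrier c x ≤ u x := fun x =>
    le_of_tendsto ((continuousAt_barrier_param x hc.ne').tendsto.mono_left nhdsWithin_le_nhds)
      (eventually_nhdsWithin_of_forall (s := Set.Ioi c) fun θ hθ =>
        hu.2.barrier_le hucont (hc.trans hθ) hθ x)
  refine ⟨fun x => (etaS_eq_barrier hc x).trans_le (hbarrier x), fun x hsum hdiff => ?_⟩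
  rw [gObst_eq_max]
  refine lt_of_lt_of_le (max_lt (max_lt_barrier hdiff) ?_) (hbarrier x)
  linarith [le_max_left (x 0) (x 1), le_max_right (x 0) (x 1), max_lt_barrier (θ := c) hdiff]

/-- Lower bound of the free boundary in dimension two. -/
theorem lower_bound_free_boundary_dim_two (c : ℝ) (hc : 0 < c)
    (u : EuclideanSpace ℝ (Fin 2) → ℝ) (hucont : Continuous u)
    (hu : IsVSol c gObst Set.univ u) (hgrowth : LinGrowth gObst u) :
    (∀ x : EuclideanSpace ℝ (Fin 2),
        etaS c ((x 0 + x 1) / Real.sqrt 2) ((x 0 - x 1) / Real.sqrt 2) ≤ u x) ∧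
      ∀ x : EuclideanSpace ℝ (Fin 2),
        0 ≤ x 0 + x 1 → |x 0 - x 1| < 1 / (2 * c) → gObst x < u x :=
  lower_bound_free_boundary_dim_two_general c hc u hucont hu
end

section
/- Contact region in the positive orthant (upper bound of the free boundary in general dimension): There exists a universal constant γ > 1, independent of d and c, such that for every integer d ≥ 2, every c > 0, and every viscosity solution u of min{−(1/2)Δu + c, u − g} = 0 on ℝ^d with at most linear growth, one has u(x) = g(x) for every x in the set N(γd/c) := {x ∈ ℝ^d : xᵢ ≥ 0 for all i, and |xᵢ − x_j| ≥ γd/c for all i ≠ j}. -/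
/-!
Take `γ = 2`. At `x₀ ∈ N(2d/c)` let `i₀` be the largest coordinate, so `g x₀ = x₀ i₀` and
every other coordinate lies at least `2d/c` below it. For `ε > 0` the paraboloid
`w x = x i₀ + (c / 2d) ‖x - x₀‖² + ε` dominates `g` (its curvature makes up for the gap),
satisfies `-½ Δw + c = c/2 > 0`, and by linear growth dominates `u` on a large sphere around
`x₀`. A positive interior maximum of `u - w` would contradict the subsolution property, so
`u x₀ ≤ w x₀ = g x₀ + ε`.
-/
open Filter MeasureTheory

def NSet (d : ℕ) (γ' : ℝ) : Set (EuclideanSpace ℝ (Fin d)) :=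
  {x | (∀ i, 0 ≤ x i) ∧ ∀ i j, i ≠ j → γ' ≤ |x i - x j|}

open scoped RealInnerProductSpace

section Laplacian

variable {d : ℕ}

theorem lap_add_const (φ : EuclideanSpace ℝ (Fin d) → ℝ) (K : ℝ) (x : EuclideanSpace ℝ (Fin d)) :
    lap (fun y => φ y + K) x = lap φ x := by
  have h : fderiv ℝ (fun y => φ y + K) = fderiv ℝ φ := funext fun y => fderiv_add_const K
  simp only [lap, iteratedFDeriv_two_apply, h]

theorem hasFDerivAt_paraboloid (L : EuclideanSpace ℝ (Fin d) →L[ℝ] ℝ) (a K : ℝ)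
    (y x : EuclideanSpace ℝ (Fin d)) :
    HasFDerivAt (fun z => L z + a * ‖z - y‖ ^ 2 + K)
      (L + (2 * a) • innerSL ℝ (x - y)) x := by
  have h := (L.hasFDerivAt.add
    (((hasFDerivAt_id x).sub_const y).norm_sq.const_mul a)).add_const K
  refine h.congr_fderiv ?_
  ext v
  simp only [id_eq, map_sub, ContinuousLinearMap.comp_id, add_apply, smul_apply, sub_apply,
    coe_innerSL_apply, nsmul_eq_mul, Nat.cast_ofNat, smul_eq_mul, add_right_inj]
  ring

theorem contDiff_paraboloid (L : EuclideanSpace ℝ (Fin d) →L[ℝ] ℝ) (a K : ℝ)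
    (y : EuclideanSpace ℝ (Fin d)) :
    ContDiff ℝ 2 (fun z => L z + a * ‖z - y‖ ^ 2 + K) :=
  (L.contDiff.add (contDiff_const.mul ((contDiff_norm_sq ℝ).comp
    (contDiff_id.sub contDiff_const)))).add contDiff_const

theorem lap_paraboloid (L : EuclideanSpace ℝ (Fin d) →L[ℝ] ℝ) (a K : ℝ)
    (y x : EuclideanSpace ℝ (Fin d)) :
    lap (fun z => L z + a * ‖z - y‖ ^ 2 + K) x = 2 * a * d := by
  have h1 : fderiv ℝ (fun z => L z + a * ‖z - y‖ ^ 2 + K)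
      = fun x => L + (2 * a) • innerSL ℝ (x - y) :=
    funext fun x => (hasFDerivAt_paraboloid L a K y x).fderiv
  have h2 : HasFDerivAt (fun x => L + (2 * a) • innerSL ℝ (x - y))
      ((2 * a) • innerSL ℝ) x := by
    simpa using ((((innerSL ℝ).hasFDerivAt (x := x)).sub_const (innerSL ℝ y)).const_smul
      (2 * a)).const_add L
  rw [lap]
  simp only [iteratedFDeriv_two_apply, h1, h2.fderiv]
  simp [innerSL_apply_apply ℝ, mul_comm]

end Laplacian

section Comparison

variable {d : ℕ} {c : ℝ} {ψ u w : EuclideanSpace ℝ (Fin d) → ℝ}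
  {Ω : Set (EuclideanSpace ℝ (Fin d))} {x₀ : EuclideanSpace ℝ (Fin d)} {R : ℝ}

/-- At an interior positive maximum of `u - w`, the function `w + max (u - w)` touches `u` from
above at a point where `u > ψ`, and the subsolution test contradicts the strict inequality
for `w`. -/
theorem IsVSubsol.le_of_le_on_sphere (hsub : IsVSubsol c ψ Ω u) (hΩ : Metric.ball x₀ R ⊆ Ω)
    (hu : ContinuousOn u (Metric.closedBall x₀ R)) (hw : ContDiff ℝ 2 w)
    (hw_strict : ∀ x ∈ Metric.ball x₀ R, 0 < -(1 / 2 : ℝ) * lap w x + c)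
    (hψw : ∀ x ∈ Metric.ball x₀ R, ψ x ≤ w x)
    (hbdry : ∀ x ∈ Metric.sphere x₀ R, u x ≤ w x) :
    ∀ x ∈ Metric.closedBall x₀ R, u x ≤ w x := by
  intro x hx
  obtain ⟨xs, hxs, hmax⟩ := (isCompact_closedBall x₀ R).exists_isMaxOn ⟨x, hx⟩
    (hu.sub hw.continuous.continuousOn)
  have hmax' : ∀ y ∈ Metric.closedBall x₀ R, u y - w y ≤ u xs - w xs := hmax
  suffices u xs ≤ w xs by linarith [hmax' x hx]
  by_contra! hlt
  have hxs_ball : xs ∈ Metric.ball x₀ R := by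
    refine lt_of_le_of_ne (Metric.mem_closedBall.mp hxs) fun h => ?_
    linarith [hbdry xs (Metric.mem_sphere.mpr h)]
  have htouch : ∀ᶠ y in nhds xs, u y ≤ w y + (u xs - w xs) := by
    filter_upwards [Metric.isOpen_ball.mem_nhds hxs_ball] with y hy
    linarith [hmax' y (Metric.ball_subset_closedBall hy)]
  have hsol := hsub xs (hΩ hxs_ball) ((hψw xs hxs_ball).trans_lt hlt) _
    (hw.add contDiff_const) (by ring) htouch
  rw [lap_add_const] at hsol
  linarith [hw_strict xs hxs_ball]

end Comparison

section Barrier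

variable {d : ℕ}

theorem abs_apply_sub_le_norm (x y : EuclideanSpace ℝ (Fin d)) (i : Fin d) :
    |x i - y i| ≤ ‖x - y‖ := by
  simpa using PiLp.norm_apply_le (x - y) i

theorem gObst_eq_apply_of_isMax {x : EuclideanSpace ℝ (Fin d)} {i₀ : Fin d}
    (hmax : ∀ j, x j ≤ x i₀) (hnonneg : 0 ≤ x i₀) : gObst x = x i₀ := by
  have : Nonempty (Fin d) := ⟨i₀⟩
  have hsup : (⨆ j, x j) = x i₀ :=
    le_antisymm (ciSup_le hmax) (le_ciSup (Set.finite_range _).bddAbove i₀)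
  rw [gObst, hsup, max_eq_left hnonneg]

theorem exists_dominant_apply_of_mem_NSet (hd : 2 ≤ d) {γ' : ℝ}
    {x : EuclideanSpace ℝ (Fin d)} (hx : x ∈ NSet d γ') :
    ∃ i₀, gObst x = x i₀ ∧ γ' ≤ x i₀ ∧ ∀ j ≠ i₀, x j + γ' ≤ x i₀ := by
  obtain ⟨hpos, hsep⟩ := hx
  have : Nontrivial (Fin d) := Fin.nontrivial_iff_two_le.mpr hd
  obtain ⟨i₀, hmax⟩ := Finite.exists_max fun i => x i
  have hgap : ∀ j ≠ i₀, x j + γ' ≤ x i₀ := by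
    intro j hj
    have h := hsep i₀ j hj.symm
    rw [abs_of_nonneg (sub_nonneg.mpr (hmax j))] at h
    linarith
  obtain ⟨j, hj⟩ := exists_ne i₀
  exact ⟨i₀, gObst_eq_apply_of_isMax hmax (hpos i₀), by linarith [hgap j hj, hpos j], hgap⟩

/-- With `ρ = ‖x - x₀‖`, the quadratics `a ρ² - 2 ρ + γ'` (coordinates `j ≠ i₀`) and
`a ρ² - ρ + γ'` (the obstacle value `0`) have nonpositive discriminant since `a γ' ≥ 1`. -/
theorem gObst_le_paraboloid {x₀ : EuclideanSpace ℝ (Fin d)} {i₀ : Fin d} {γ' a : ℝ}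
    (ha : 0 < a) (haγ : 1 ≤ a * γ') (hγ : γ' ≤ x₀ i₀)
    (hgap : ∀ j ≠ i₀, x₀ j + γ' ≤ x₀ i₀) (x : EuclideanSpace ℝ (Fin d)) :
    gObst x ≤ x i₀ + a * ‖x - x₀‖ ^ 2 := by
  have : Nonempty (Fin d) := ⟨i₀⟩
  set ρ := ‖x - x₀‖
  have hρ : 0 ≤ ρ := norm_nonneg _
  have hcoord (j : Fin d) := abs_le.mp (abs_apply_sub_le_norm x x₀ j)
  refine max_le (ciSup_le fun j => ?_) ?_
  · by_cases hj : j = i₀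
    · rw [hj]
      nlinarith
    · nlinarith [hcoord j, hcoord i₀, hgap j hj, sq_nonneg (a * ρ - 1)]
  · nlinarith [hcoord i₀, sq_nonneg (2 * a * ρ - 1)]

theorem exists_add_mul_le_mul_sq {a : ℝ} (ha : 0 < a) (b S : ℝ) :
    ∃ R, 0 ≤ R ∧ S + b * R ≤ a * R ^ 2 := by
  set R := max 1 ((|b| + |S|) / a)
  have hR : 1 ≤ R := le_max_left _ _
  have haR : |b| + |S| ≤ a * R := by
    rw [← div_le_iff₀' ha]
    exact le_max_right _ _
  refine ⟨R, by linarith, ?_⟩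
  nlinarith [le_abs_self b, le_abs_self S, abs_nonneg S, mul_le_mul_of_nonneg_right haR
    (zero_le_one.trans hR)]

theorem exists_sphere_le_paraboloid {u : EuclideanSpace ℝ (Fin d) → ℝ} {C : ℝ}
    (hC : ∀ x, u x ≤ ∑ i, |x i| + C) (x₀ : EuclideanSpace ℝ (Fin d)) (i₀ : Fin d) {a : ℝ}
    (ha : 0 < a) :
    ∃ R, 0 ≤ R ∧ ∀ x ∈ Metric.sphere x₀ R, u x ≤ x i₀ + a * ‖x - x₀‖ ^ 2 := by
  obtain ⟨R, hR, hRa⟩ := exists_add_mul_le_mul_sq ha (d + 1) (∑ i, |x₀ i| - x₀ i₀ + C)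
  refine ⟨R, hR, fun x hx => ?_⟩
  rw [mem_sphere_iff_norm] at hx
  have hsum : ∑ i, |x i| ≤ ∑ i, |x₀ i| + d * R := by
    calc ∑ i, |x i| ≤ ∑ i, (|x₀ i| + R) := Finset.sum_le_sum fun i _ => by
          linarith [abs_sub_abs_le_abs_sub (x i) (x₀ i), abs_apply_sub_le_norm x x₀ i]
      _ = ∑ i, |x₀ i| + d * R := by simp [Finset.sum_add_distrib]
  have hi₀ := (abs_le.mp (hx ▸ abs_apply_sub_le_norm x x₀ i₀)).1
  rw [hx]
  linarith [hC x]

end Barrier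

/-- Contact region in the positive orthant: upper bound of the free
boundary in general dimension. -/
theorem contact_region_positive_orthant :
    ∃ γ : ℝ, 1 < γ ∧ ∀ d : ℕ, 2 ≤ d → ∀ c : ℝ, 0 < c →
      ∀ u : EuclideanSpace ℝ (Fin d) → ℝ, Continuous u →
        IsVSol c gObst Set.univ u → LinGrowth gObst u →
          ∀ x ∈ NSet d (γ * d / c), u x = gObst x := by
  refine ⟨2, one_lt_two, fun d hd c hc u hu ⟨hsub, _⟩ ⟨hg, C, hC⟩ x₀ hx₀ => ?_⟩
  obtain ⟨i₀, hg₀, hγ, hgap⟩ := exists_dominant_apply_of_mem_NSet hd hx₀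
  set a := c / (2 * d) with ha_def
  have ha : 0 < a := by positivity
  have had : a * d = c / 2 := by rw [ha_def]; field_simp
  have haγ : a * (2 * d / c) = 1 := by rw [ha_def]; field_simp
  obtain ⟨R, hR, hsphere⟩ := exists_sphere_le_paraboloid hC x₀ i₀ ha
  refine le_antisymm (le_of_forall_pos_le_add fun ε hε => ?_) (hg x₀)
  have hcomp := hsub.le_of_le_on_sphere (w := fun x =>
      EuclideanSpace.proj i₀ x + a * ‖x - x₀‖ ^ 2 + ε) (Set.subset_univ _) hu.continuousOn
    (contDiff_paraboloid _ a ε x₀)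
    (fun x _ => by rw [lap_paraboloid]; linarith)
    (fun x _ => (gObst_le_paraboloid ha haγ.ge hγ hgap x).trans (by simp [hε.le]))
    (fun x hx => (hsphere x hx).trans (by simp [hε.le])) x₀ (Metric.mem_closedBall_self hR)
  simpa [hg₀] using hcomp
end
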